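/- arXiv:0901.2916 — 3 statements merged into one kernel-verified Lean document; each statement's English description precedes it below -/
import Mathlib

section
/- Let y and z be any two solutions of problem (H). Then the Wronskian W_n(y,z) is constant on each of the integer intervals (−∞,−1] and [1,∞); denoting these constant values by ω⁻ and ω⁺ respectively, one has ω⁻ = d₁ d₂ ω⁺ and W₀(y,z) = −d₂ ω⁺. -/
/- Problem (H): the second order linear difference equation
   −Δ²y_{n−1} + p_n y_n = 0 on ℤ₀ = ℤ \ {0,1}, with impulse conditions
   y_{−1} = d₁ y₁ and Δy_{−1} = d₂ Δy₁, for a sequence y : ℤ → ℂ. -/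
def IsSolH (p : ℤ → ℂ) (d₁ d₂ : ℂ) (y : ℤ → ℂ) : Prop :=
  (∀ n : ℤ, n ≠ 0 → n ≠ 1 → -(y (n + 1) - 2 * y n + y (n - 1)) + p n * y n = 0) ∧
  y (-1) = d₁ * y 1 ∧
  y 0 - y (-1) = d₂ * (y 2 - y 1)

/-- The Wronskian W_n(y,z) = y_n z_{n+1} − y_{n+1} z_n. -/
def Wr (y z : ℤ → ℂ) (n : ℤ) : ℂ := y n * z (n + 1) - y (n + 1) * z n

/-! Away from the impulse points, `W_n − W_{n−1} = z_n Δ²y_{n−1} − y_n Δ²z_{n−1}`, and the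
potential terms `p_n y_n z_n` cancel, so the Wronskian is locally constant on each half-line.
Across the impulse, the conditions express `y_{−1}` and `y_0` through `y_1, y_2`, and
substituting them turns `W_{−1}` and `W_0` into multiples of `W_1`. -/

theorem eq_of_forall_eq_sub_one_of_le {α : Type*} {f : ℤ → α} {a : ℤ}
    (h : ∀ n, a < n → f n = f (n - 1)) {n : ℤ} (hn : a ≤ n) : f n = f a := by
  induction n, hn using Int.leInduction with
  | base => rfl
  | succ m hm ih => rw [h (m + 1) (by omega), add_sub_cancel_right, ih]

theorem eq_of_forall_eq_sub_one_of_le_down {α : Type*} {f : ℤ → α} {a : ℤ}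
    (h : ∀ n, n ≤ a → f n = f (n - 1)) {n : ℤ} (hn : n ≤ a) : f n = f a := by
  induction n, hn using Int.leInductionDown with
  | base => rfl
  | pred m hm ih => rw [← ih, h m hm]

theorem Wr_eq_Wr_sub_one {y z : ℤ → ℂ} {n : ℤ} {q : ℂ}
    (hy : -(y (n + 1) - 2 * y n + y (n - 1)) + q * y n = 0)
    (hz : -(z (n + 1) - 2 * z n + z (n - 1)) + q * z n = 0) :
    Wr y z n = Wr y z (n - 1) := by
  simp only [Wr, sub_add_cancel]
  linear_combination z n * hy - y n * hz

namespace IsSolH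

variable {p : ℤ → ℂ} {d₁ d₂ : ℂ} {y z : ℤ → ℂ}

theorem apply_zero (hy : IsSolH p d₁ d₂ y) : y 0 = d₁ * y 1 + d₂ * (y 2 - y 1) := by
  linear_combination hy.2.2 + hy.2.1

theorem Wr_eq_Wr_sub_one (hy : IsSolH p d₁ d₂ y) (hz : IsSolH p d₁ d₂ z) {n : ℤ}
    (h₀ : n ≠ 0) (h₁ : n ≠ 1) : Wr y z n = Wr y z (n - 1) :=
  _root_.Wr_eq_Wr_sub_one (hy.1 n h₀ h₁) (hz.1 n h₀ h₁)

theorem Wr_neg_one (hy : IsSolH p d₁ d₂ y) (hz : IsSolH p d₁ d₂ z) :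
    Wr y z (-1) = d₁ * d₂ * Wr y z 1 := by
  simp only [Wr, show (-1 : ℤ) + 1 = 0 by norm_num, show (1 : ℤ) + 1 = 2 by norm_num,
    hy.2.1, hz.2.1, hy.apply_zero, hz.apply_zero]
  ring

theorem Wr_zero (hy : IsSolH p d₁ d₂ y) (hz : IsSolH p d₁ d₂ z) :
    Wr y z 0 = -d₂ * Wr y z 1 := by
  simp only [Wr, zero_add, show (1 : ℤ) + 1 = 2 by norm_num, hy.apply_zero, hz.apply_zero]
  ring

end IsSolH

theorem wronskian_of_solutions_general (p : ℤ → ℂ) (d₁ d₂ : ℂ)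
    (y z : ℤ → ℂ) (hy : IsSolH p d₁ d₂ y) (hz : IsSolH p d₁ d₂ z) :
    ∃ ωminus ωplus : ℂ,
      (∀ n : ℤ, n ≤ -1 → Wr y z n = ωminus) ∧
      (∀ n : ℤ, 1 ≤ n → Wr y z n = ωplus) ∧
      ωminus = d₁ * d₂ * ωplus ∧
      Wr y z 0 = -d₂ * ωplus :=
  ⟨Wr y z (-1), Wr y z 1,
    fun _ hn => eq_of_forall_eq_sub_one_of_le_down
      (fun m hm => hy.Wr_eq_Wr_sub_one hz (by omega) (by omega)) hn,
    fun _ hn => eq_of_forall_eq_sub_one_of_le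
      (fun m hm => hy.Wr_eq_Wr_sub_one hz (by omega) (by omega)) hn,
    hy.Wr_neg_one hz, hy.Wr_zero hz⟩

/-- the Wronskian of two solutions of (H) is constant on (−∞,−1]
and on [1,∞), with ω⁻ = d₁ d₂ ω⁺ and W₀(y,z) = −d₂ ω⁺. -/
theorem wronskian_of_solutions (p : ℤ → ℂ) (d₁ d₂ : ℂ) (hd₁ : d₁ ≠ 0) (hd₂ : d₂ ≠ 0)
    (y z : ℤ → ℂ) (hy : IsSolH p d₁ d₂ y) (hz : IsSolH p d₁ d₂ z) :
    ∃ ωminus ωplus : ℂ,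
      (∀ n : ℤ, n ≤ -1 → Wr y z n = ωminus) ∧
      (∀ n : ℤ, 1 ≤ n → Wr y z n = ωplus) ∧
      ωminus = d₁ * d₂ * ωplus ∧
      Wr y z 0 = -d₂ * ωplus :=
  wronskian_of_solutions_general p d₁ d₂ y z hy hz
end

section
/- If y and z are two solutions of problem (H), then either W_n(y,z) = 0 for all n ∈ ℤ, or W_n(y,z) ≠ 0 for all n ∈ ℤ. -/
lemma wr_step (p : ℤ → ℂ) (d₁ d₂ : ℂ) (y z : ℤ → ℂ)
    (hy : IsSolH p d₁ d₂ y) (hz : IsSolH p d₁ d₂ z)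
    (n : ℤ) (h0 : n ≠ 0) (h1 : n ≠ 1) : Wr y z n = Wr y z (n - 1) := by
  have hy' := hy.1 n h0 h1
  have hz' := hz.1 n h0 h1
  simp only [Wr, sub_add_cancel]
  linear_combination z n * hy' - y n * hz'

/-- for two solutions of (H), the Wronskian either vanishes for all
n ∈ ℤ or is nonzero for all n ∈ ℤ. -/
theorem wronskian_zero_or_never_zero (p : ℤ → ℂ) (d₁ d₂ : ℂ) (hd₁ : d₁ ≠ 0) (hd₂ : d₂ ≠ 0)
    (y z : ℤ → ℂ) (hy : IsSolH p d₁ d₂ y) (hz : IsSolH p d₁ d₂ z) :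
    (∀ n : ℤ, Wr y z n = 0) ∨ (∀ n : ℤ, Wr y z n ≠ 0) := by
  have hym : y (-1) = d₁ * y 1 := hy.2.1
  have hzm : z (-1) = d₁ * z 1 := hz.2.1
  have hy0 : y 0 = d₁ * y 1 + d₂ * (y 2 - y 1) := by linear_combination hy.2.2 + hym
  have hz0 : z 0 = d₁ * z 1 + d₂ * (z 2 - z 1) := by linear_combination hz.2.2 + hzm
  have hWm : Wr y z (-1) = d₁ * d₂ * Wr y z 1 := by
    show y (-1) * z (-1 + 1) - y (-1 + 1) * z (-1)
        = d₁ * d₂ * (y 1 * z (1 + 1) - y (1 + 1) * z 1)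
    norm_num
    rw [hym, hy0, hzm, hz0]; ring
  have hW0 : Wr y z 0 = -d₂ * Wr y z 1 := by
    show y 0 * z (0 + 1) - y (0 + 1) * z 0
        = -d₂ * (y 1 * z (1 + 1) - y (1 + 1) * z 1)
    norm_num
    rw [hy0, hz0]; ring
  have hup : ∀ k : ℕ, Wr y z (1 + k) = Wr y z 1 := by
    intro k
    induction k with
    | zero => norm_num
    | succ k ih =>
      have h := wr_step p d₁ d₂ y z hy hz (1 + (k + 1 : ℕ)) (by push_cast; omega)
        (by push_cast; omega)
      have e : (1 + (k + 1 : ℕ) : ℤ) - 1 = 1 + (k : ℕ) := by push_cast; ring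
      rw [e] at h
      rw [h, ih]
  have hdown : ∀ k : ℕ, Wr y z (-1 - k) = Wr y z (-1) := by
    intro k
    induction k with
    | zero => norm_num
    | succ k ih =>
      have h := wr_step p d₁ d₂ y z hy hz (-1 - (k : ℕ)) (by omega)
        (by omega)
      have e : (-1 - (k : ℕ) : ℤ) - 1 = -1 - ((k + 1 : ℕ) : ℤ) := by push_cast; ring
      rw [e] at h
      rw [← h, ih]
  have key : ∀ n : ℤ, Wr y z n = 0 ↔ Wr y z 1 = 0 := by
    intro n
    rcases lt_trichotomy n 0 with h | h | h
    · obtain ⟨k, hk⟩ : ∃ k : ℕ, n = -1 - k := ⟨(-1 - n).toNat, by omega⟩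
      rw [hk, hdown, hWm]
      constructor
      · intro h'
        rcases mul_eq_zero.mp h' with h'' | h''
        · exact absurd h'' (mul_ne_zero hd₁ hd₂)
        · exact h''
      · intro h'; rw [h', mul_zero]
    · rw [h, hW0]
      constructor
      · intro h'
        rcases mul_eq_zero.mp h' with h'' | h''
        · exact absurd h'' (neg_ne_zero.mpr hd₂)
        · exact h''
      · intro h'; rw [h', mul_zero]
    · obtain ⟨k, hk⟩ : ∃ k : ℕ, n = 1 + k := ⟨(n - 1).toNat, by omega⟩
      rw [hk, hup]
  by_cases hA : Wr y z 1 = 0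
  · left; intro n; exact (key n).mpr hA
  · right; intro n h; exact hA ((key n).mp h)
end

section
/- Suppose u and v are solutions of problem (H) with Wronskian W_n(u,v) ≠ 0 for all n. Let (h_n) be a complex sequence defined for n ∈ ℤ₀, extended by h₀ = h₁ = 0. Define x_n = −∑_{s=n}^{0} (u_n v_s − u_s v_n)/W_s(u,v) · h_s for n ≤ 0 and x_n = ∑_{s=1}^{n} (u_n v_s − u_s v_n)/W_s(u,v) · h_s for n ≥ 1. Then x satisfies −Δ²x_{n−1} + p_n x_n = h_n for n ∈ ℤ₀ together with x_{−1} = Δx_{−1} = 0 and x₁ = Δx₁ = 0 (in particular x satisfies the impulse conditions), and a sequence y = (y_n)_{n∈ℤ} satisfies −Δ²y_{n−1} + p_n y_n = h_n for n ∈ ℤ₀ together with y_{−1} = d₁ y₁, Δy_{−1} = d₂ Δy₁ if and only if y_n = c₁ u_n + c₂ v_n + x_n for some complex constants c₁, c₂. -/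
/-!
For fixed `s`, the Cauchy kernel `m ↦ (u m * v s - u s * v m) / W_s(u,v)` is a combination of
`u` and `v`, so it solves the homogeneous equation, vanishes at `m = s` and equals `-1` at
`m = s + 1`. Applying the difference operator to the sum defining `x` therefore leaves only a
boundary term, which is exactly `h n`; on the right of the impulse this uses that the Wronskian
of two solutions is constant across every `n ∈ ℤ₀`. Conversely, a solution of (H) is determined
by its values at `1` and `2` (the impulse conditions give those at `-1` and `0`, the recurrence
the rest), so `y - x`, which solves (H), is the combination of `u` and `v` matching it at `1` and
`2`; this combination exists because `W_1(u,v) ≠ 0`.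
-/

open Finset

def diffOp (p y : ℤ → ℂ) (n : ℤ) : ℂ := -(y (n + 1) - 2 * y n + y (n - 1)) + p n * y n

def IsSolNH (p : ℤ → ℂ) (d₁ d₂ : ℂ) (h y : ℤ → ℂ) : Prop :=
  (∀ n : ℤ, n ≠ 0 → n ≠ 1 → diffOp p y n = h n) ∧
  y (-1) = d₁ * y 1 ∧
  y 0 - y (-1) = d₂ * (y 2 - y 1)

section Superposition

variable {p : ℤ → ℂ} {d₁ d₂ : ℂ}

lemma isSolH_linearCombination {y z : ℤ → ℂ} (a b : ℂ)
    (hy : IsSolH p d₁ d₂ y) (hz : IsSolH p d₁ d₂ z) :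
    IsSolH p d₁ d₂ (fun n => a * y n + b * z n) := by
  refine ⟨fun n hn₀ hn₁ => ?_, ?_, ?_⟩
  · linear_combination a * hy.1 n hn₀ hn₁ + b * hz.1 n hn₀ hn₁
  · linear_combination a * hy.2.1 + b * hz.2.1
  · linear_combination a * hy.2.2 + b * hz.2.2

lemma IsSolNH.isSolH_sub {h y x : ℤ → ℂ} (hy : IsSolNH p d₁ d₂ h y) (hx : IsSolNH p d₁ d₂ h x) :
    IsSolH p d₁ d₂ (fun n => y n - x n) := by
  refine ⟨fun n hn₀ hn₁ => ?_, ?_, ?_⟩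
  · have ey := hy.1 n hn₀ hn₁
    have ex := hx.1 n hn₀ hn₁
    simp only [diffOp] at ey ex
    linear_combination ey - ex
  · linear_combination hy.2.1 - hx.2.1
  · linear_combination hy.2.2 - hx.2.2

lemma IsSolH.isSolNH_add {h w x : ℤ → ℂ} (hw : IsSolH p d₁ d₂ w) (hx : IsSolNH p d₁ d₂ h x) :
    IsSolNH p d₁ d₂ h (fun n => w n + x n) := by
  refine ⟨fun n hn₀ hn₁ => ?_, ?_, ?_⟩
  · have ex := hx.1 n hn₀ hn₁
    simp only [diffOp] at ex ⊢
    linear_combination hw.1 n hn₀ hn₁ + ex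
  · linear_combination hw.2.1 + hx.2.1
  · linear_combination hw.2.2 + hx.2.2

end Superposition

section Uniqueness

variable {p w : ℤ → ℂ}

lemma eq_zero_of_diffOp_eq_zero_of_ge {a : ℤ} (heq : ∀ n, a < n → diffOp p w n = 0)
    (ha : w a = 0) (ha' : w (a + 1) = 0) : ∀ n, a ≤ n → w n = 0 := by
  suffices ∀ n, a ≤ n → w n = 0 ∧ w (n + 1) = 0 from fun n hn => (this n hn).1
  intro n hn
  induction n, hn using Int.leInduction with
  | base => exact ⟨ha, ha'⟩
  | succ n hn ih =>
    have e := heq (n + 1) (by omega)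
    rw [diffOp, add_sub_cancel_right, ih.1, ih.2] at e
    exact ⟨ih.2, by linear_combination -e⟩

lemma eq_zero_of_diffOp_eq_zero_of_le {b : ℤ} (heq : ∀ n, n < b → diffOp p w n = 0)
    (hb : w b = 0) (hb' : w (b - 1) = 0) : ∀ n, n ≤ b → w n = 0 := by
  suffices ∀ n, n ≤ b → w n = 0 ∧ w (n - 1) = 0 from fun n hn => (this n hn).1
  intro n hn
  induction n, hn using Int.leInductionDown with
  | base => exact ⟨hb, hb'⟩
  | pred n hn ih =>
    have e := heq (n - 1) (by omega)
    rw [diffOp, sub_add_cancel, ih.1, ih.2] at e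
    exact ⟨ih.2, by linear_combination -e⟩

lemma IsSolH.eq_zero {d₁ d₂ : ℂ} (hw : IsSolH p d₁ d₂ w) (h₁ : w 1 = 0) (h₂ : w 2 = 0) (n : ℤ) :
    w n = 0 := by
  have hm₁ : w (-1) = 0 := by rw [hw.2.1, h₁, mul_zero]
  have h₀ : w 0 = 0 := by linear_combination hw.2.2 + hm₁ + d₂ * h₂ - d₂ * h₁
  rcases le_or_gt n 0 with hn | hn
  · exact eq_zero_of_diffOp_eq_zero_of_le (fun m hm => hw.1 m (by omega) (by omega)) h₀ hm₁ n hn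
  · exact eq_zero_of_diffOp_eq_zero_of_ge (fun m hm => hw.1 m (by omega) (by omega)) h₁ h₂ n hn

end Uniqueness

lemma IsSolH.exists_eq_linearCombination {p u v w : ℤ → ℂ} {d₁ d₂ : ℂ}
    (hw : IsSolH p d₁ d₂ w) (hu : IsSolH p d₁ d₂ u) (hv : IsSolH p d₁ d₂ v)
    (hW : Wr u v 1 ≠ 0) : ∃ c₁ c₂ : ℂ, ∀ n, w n = c₁ * u n + c₂ * v n := by
  have hW' : Wr u v 1 = u 1 * v 2 - u 2 * v 1 := by norm_num [Wr]
  -- Cramer's rule for matching `w` at `1` and `2`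
  set c₁ := (w 1 * v 2 - w 2 * v 1) / Wr u v 1
  set c₂ := (u 1 * w 2 - u 2 * w 1) / Wr u v 1
  have hr := isSolH_linearCombination 1 (-1) hw (isSolH_linearCombination c₁ c₂ hu hv)
  have hr₁ : w 1 - (c₁ * u 1 + c₂ * v 1) = 0 := by
    simp only [c₁, c₂]; field_simp; rw [hW']; ring
  have hr₂ : w 2 - (c₁ * u 2 + c₂ * v 2) = 0 := by
    simp only [c₁, c₂]; field_simp; rw [hW']; ring
  refine ⟨c₁, c₂, fun n => ?_⟩
  linear_combination hr.eq_zero (by linear_combination hr₁) (by linear_combination hr₂) n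

lemma Wr_sub_one_eq {p y z : ℤ → ℂ} {n : ℤ} (hy : diffOp p y n = 0) (hz : diffOp p z n = 0) :
    Wr y z (n - 1) = Wr y z n := by
  simp only [Wr, diffOp, sub_add_cancel] at hy hz ⊢
  linear_combination y n * hz - z n * hy

lemma diffOp_sum (p : ℤ → ℂ) (S : Finset ℤ) (f : ℤ → ℤ → ℂ) (n : ℤ) :
    diffOp p (fun m => ∑ s ∈ S, f s m) n = ∑ s ∈ S, diffOp p (f s) n := by
  simp only [diffOp, sum_add_distrib, sum_sub_distrib, sum_neg_distrib, mul_sum]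

noncomputable def cauchyKernel (u v : ℤ → ℂ) (m s : ℤ) : ℂ := (u m * v s - u s * v m) / Wr u v s

section CauchyKernel

variable {u v : ℤ → ℂ}

lemma cauchyKernel_self (s : ℤ) : cauchyKernel u v s s = 0 := by
  simp [cauchyKernel]

lemma cauchyKernel_add_one_left {s : ℤ} (hW : Wr u v s ≠ 0) :
    cauchyKernel u v (s + 1) s = -1 := by
  rw [cauchyKernel, ← neg_div_self hW, Wr]
  ring

lemma cauchyKernel_sub_one_left (s : ℤ) :
    cauchyKernel u v (s - 1) s = Wr u v (s - 1) / Wr u v s := by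
  rw [cauchyKernel, Wr.eq_1 u v (s - 1), sub_add_cancel]

lemma diffOp_cauchyKernel_mul {p : ℤ → ℂ} {n : ℤ} (hu : diffOp p u n = 0) (hv : diffOp p v n = 0)
    (s : ℤ) (c : ℂ) : diffOp p (fun m => cauchyKernel u v m s * c) n = 0 := by
  simp only [diffOp, cauchyKernel] at hu hv ⊢
  linear_combination (v s * c / Wr u v s) * hu - (u s * c / Wr u v s) * hv

end CauchyKernel

noncomputable def particularSol (u v h : ℤ → ℂ) (n : ℤ) : ℂ :=
  if n ≤ 0 then -∑ s ∈ Icc n 0, cauchyKernel u v n s * h s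
  else ∑ s ∈ Icc 1 n, cauchyKernel u v n s * h s

section ParticularSol

variable {p u v h : ℤ → ℂ}

lemma particularSol_of_nonpos {n : ℤ} (hn : n ≤ 0) :
    particularSol u v h n = -∑ s ∈ Icc n 0, cauchyKernel u v n s * h s :=
  if_pos hn

lemma particularSol_of_pos {n : ℤ} (hn : 0 < n) :
    particularSol u v h n = ∑ s ∈ Icc 1 n, cauchyKernel u v n s * h s :=
  if_neg (not_le.mpr hn)

lemma particularSol_zero : particularSol u v h 0 = 0 := by
  simp [particularSol_of_nonpos le_rfl, cauchyKernel_self]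

lemma particularSol_one : particularSol u v h 1 = 0 := by
  simp [particularSol_of_pos one_pos, cauchyKernel_self]

lemma particularSol_neg_one (h₀ : h 0 = 0) : particularSol u v h (-1) = 0 := by
  rw [particularSol_of_nonpos (by norm_num), ← insert_Icc_add_one_left_eq_Icc (by norm_num),
    sum_insert (by simp)]
  norm_num [cauchyKernel_self, h₀]

lemma particularSol_two (h₁ : h 1 = 0) : particularSol u v h 2 = 0 := by
  rw [particularSol_of_pos (by norm_num), ← insert_Icc_add_one_left_eq_Icc (by norm_num),
    sum_insert (by simp)]
  norm_num [cauchyKernel_self, h₁]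

lemma diffOp_particularSol_of_two_le {n : ℤ} (hn : 2 ≤ n) (hu : diffOp p u n = 0)
    (hv : diffOp p v n = 0) (hW : Wr u v n ≠ 0) : diffOp p (particularSol u v h) n = h n := by
  have hy := diffOp_sum p (Icc 1 n) (fun s m => cauchyKernel u v m s * h s) n
  rw [sum_eq_zero fun s _ => diffOp_cauchyKernel_mul hu hv s (h s)] at hy
  have hnext : particularSol u v h (n + 1) = ∑ s ∈ Icc 1 n, cauchyKernel u v (n + 1) s * h s := by
    rw [particularSol_of_pos (by omega), ← insert_Icc_right_eq_Icc_add_one (by omega),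
      sum_insert (by simp), cauchyKernel_self, zero_mul, zero_add]
  have hprev : particularSol u v h (n - 1) =
      ∑ s ∈ Icc 1 n, cauchyKernel u v (n - 1) s * h s - h n := by
    rw [particularSol_of_pos (by omega), ← insert_Icc_sub_one_right_eq_Icc (by omega : 1 ≤ n),
      sum_insert (by simp), cauchyKernel_sub_one_left, Wr_sub_one_eq hu hv, div_self hW]
    ring
  simp only [diffOp] at hy ⊢
  rw [hnext, hprev, particularSol_of_pos (by omega)]
  linear_combination hy

lemma diffOp_particularSol_of_neg {n : ℤ} (hn : n < 0) (hu : diffOp p u n = 0)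
    (hv : diffOp p v n = 0) (hW : Wr u v n ≠ 0) : diffOp p (particularSol u v h) n = h n := by
  have hy := diffOp_sum p (Icc n 0) (fun s m => cauchyKernel u v m s * h s) n
  rw [sum_eq_zero fun s _ => diffOp_cauchyKernel_mul hu hv s (h s)] at hy
  have hnext : particularSol u v h (n + 1) =
      -∑ s ∈ Icc n 0, cauchyKernel u v (n + 1) s * h s - h n := by
    rw [particularSol_of_nonpos (by omega), ← insert_Icc_add_one_left_eq_Icc (by omega : n ≤ 0),
      sum_insert (by simp), cauchyKernel_add_one_left hW]
    ring
  have hprev : particularSol u v h (n - 1) = -∑ s ∈ Icc n 0, cauchyKernel u v (n - 1) s * h s := by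
    rw [particularSol_of_nonpos (by omega), ← insert_Icc_left_eq_Icc_sub_one (by omega),
      sum_insert (by simp), cauchyKernel_self, zero_mul, zero_add]
  simp only [diffOp] at hy ⊢
  rw [hnext, hprev, particularSol_of_nonpos (by omega)]
  linear_combination -hy

lemma isSolNH_particularSol {d₁ d₂ : ℂ} (hu : IsSolH p d₁ d₂ u) (hv : IsSolH p d₁ d₂ v)
    (hW : ∀ n, Wr u v n ≠ 0) (h₀ : h 0 = 0) (h₁ : h 1 = 0) :
    IsSolNH p d₁ d₂ h (particularSol u v h) := by
  refine ⟨fun n hn₀ hn₁ => ?_, ?_, ?_⟩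
  · rcases lt_or_gt_of_ne hn₀ with hn | hn
    · exact diffOp_particularSol_of_neg hn (hu.1 n hn₀ hn₁) (hv.1 n hn₀ hn₁) (hW n)
    · exact diffOp_particularSol_of_two_le (by omega) (hu.1 n hn₀ hn₁) (hv.1 n hn₀ hn₁) (hW n)
  · rw [particularSol_neg_one h₀, particularSol_one, mul_zero]
  · rw [particularSol_zero, particularSol_neg_one h₀, particularSol_one, particularSol_two h₁]
    ring

end ParticularSol

lemma isSolNH_iff_exists_linearCombination_add {p u v h x y : ℤ → ℂ} {d₁ d₂ : ℂ}
    (hu : IsSolH p d₁ d₂ u) (hv : IsSolH p d₁ d₂ v) (hW : Wr u v 1 ≠ 0)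
    (hx : IsSolNH p d₁ d₂ h x) :
    IsSolNH p d₁ d₂ h y ↔ ∃ c₁ c₂ : ℂ, ∀ n, y n = c₁ * u n + c₂ * v n + x n := by
  constructor
  · intro hy
    obtain ⟨c₁, c₂, hc⟩ := (hy.isSolH_sub hx).exists_eq_linearCombination hu hv hW
    exact ⟨c₁, c₂, fun n => by linear_combination hc n⟩
  · rintro ⟨c₁, c₂, hc⟩
    rw [funext hc]
    exact (isSolH_linearCombination c₁ c₂ hu hv).isSolNH_add hx

theorem variation_of_constants_general (p : ℤ → ℂ) (d₁ d₂ : ℂ)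
    (u v : ℤ → ℂ) (hu : IsSolH p d₁ d₂ u) (hv : IsSolH p d₁ d₂ v)
    (hW : ∀ n : ℤ, Wr u v n ≠ 0)
    (h : ℤ → ℂ) (h0 : h 0 = 0) (h1 : h 1 = 0)
    (x : ℤ → ℂ)
    (hxneg : ∀ n : ℤ, n ≤ 0 →
      x n = -∑ s ∈ Finset.Icc n 0, (u n * v s - u s * v n) / Wr u v s * h s)
    (hxpos : ∀ n : ℤ, 1 ≤ n →
      x n = ∑ s ∈ Finset.Icc 1 n, (u n * v s - u s * v n) / Wr u v s * h s) :
    ((∀ n : ℤ, n ≠ 0 → n ≠ 1 → -(x (n + 1) - 2 * x n + x (n - 1)) + p n * x n = h n) ∧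
      x (-1) = 0 ∧ x 0 - x (-1) = 0 ∧ x 1 = 0 ∧ x 2 - x 1 = 0) ∧
    (∀ y : ℤ → ℂ,
      ((∀ n : ℤ, n ≠ 0 → n ≠ 1 → -(y (n + 1) - 2 * y n + y (n - 1)) + p n * y n = h n) ∧
        y (-1) = d₁ * y 1 ∧ y 0 - y (-1) = d₂ * (y 2 - y 1)) ↔
      ∃ c₁ c₂ : ℂ, ∀ n : ℤ, y n = c₁ * u n + c₂ * v n + x n) := by
  obtain rfl : x = particularSol u v h := funext fun n => by
    rcases le_or_gt n 0 with hn | hn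
    · exact (hxneg n hn).trans (particularSol_of_nonpos hn).symm
    · exact (hxpos n hn).trans (particularSol_of_pos hn).symm
  have hx := isSolNH_particularSol hu hv hW h0 h1
  refine ⟨⟨hx.1, particularSol_neg_one h0, ?_, particularSol_one, ?_⟩,
    fun y => isSolNH_iff_exists_linearCombination_add hu hv (hW 1) hx⟩
  · rw [particularSol_zero, particularSol_neg_one h0, sub_zero]
  · rw [particularSol_two h1, particularSol_one, sub_zero]

/-- variation of constants for the nonhomogeneous problem with impulse
conditions. With u, v a fundamental system of (H) and h extended by h₀ = h₁ = 0, the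
particular solution x given by the stated sums satisfies the nonhomogeneous equation
and x_{−1} = Δx_{−1} = x₁ = Δx₁ = 0, and the general solution of the nonhomogeneous
problem is y = c₁ u + c₂ v + x. -/
theorem variation_of_constants (p : ℤ → ℂ) (d₁ d₂ : ℂ) (hd₁ : d₁ ≠ 0) (hd₂ : d₂ ≠ 0)
    (u v : ℤ → ℂ) (hu : IsSolH p d₁ d₂ u) (hv : IsSolH p d₁ d₂ v)
    (hW : ∀ n : ℤ, Wr u v n ≠ 0)
    (h : ℤ → ℂ) (h0 : h 0 = 0) (h1 : h 1 = 0)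
    (x : ℤ → ℂ)
    (hxneg : ∀ n : ℤ, n ≤ 0 →
      x n = -∑ s ∈ Finset.Icc n 0, (u n * v s - u s * v n) / Wr u v s * h s)
    (hxpos : ∀ n : ℤ, 1 ≤ n →
      x n = ∑ s ∈ Finset.Icc 1 n, (u n * v s - u s * v n) / Wr u v s * h s) :
    ((∀ n : ℤ, n ≠ 0 → n ≠ 1 → -(x (n + 1) - 2 * x n + x (n - 1)) + p n * x n = h n) ∧
      x (-1) = 0 ∧ x 0 - x (-1) = 0 ∧ x 1 = 0 ∧ x 2 - x 1 = 0) ∧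
    (∀ y : ℤ → ℂ,
      ((∀ n : ℤ, n ≠ 0 → n ≠ 1 → -(y (n + 1) - 2 * y n + y (n - 1)) + p n * y n = h n) ∧
        y (-1) = d₁ * y 1 ∧ y 0 - y (-1) = d₂ * (y 2 - y 1)) ↔
      ∃ c₁ c₂ : ℂ, ∀ n : ℤ, y n = c₁ * u n + c₂ * v n + x n) :=
  variation_of_constants_general p d₁ d₂ u v hu hv hW h h0 h1 x hxneg hxpos
end
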